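/- (Reduction of combining to non-combining collectives, no-solution direction.) Under the same setup and assumptions (a) and (b) as the solution direction: if T with round sequence r_0,…,r_{S−1} is an exactly-once algorithm for the original combining instance (cap, pre, post), then 𝓡(T) with the reversed round sequence r_{S−1},…,r_0 is an exactly-once algorithm for the reversed non-combining instance (capᵀ, pre′, post′). Consequently, if no exactly-once algorithm with S steps exists for the reversed instance, then none exists for the original instance. -/
import Mathlib


/-- The bandwidth constraint: for every step `s` and ordered pair `(n,n')`, the number
of chunks `c` with `(c,n,n',s) ∈ T` is at most `cap n n' * r s`. -/
def BWOk {G P S : ℕ} (cap : Fin P → Fin P → ℕ)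
    (T : Finset (Fin G × Fin P × Fin P × Fin S)) (r : Fin S → ℕ) : Prop :=
  ∀ s n n',
    (T.filter fun x => x.2.1 = n ∧ x.2.2.1 = n' ∧ x.2.2.2 = s).card ≤ cap n n' * r s

open Classical in
/-- The counting run of a chunk-keyed candidate `T` on identifiers, via the chunk map `χ`:
`cnt_0(i,n) = 1` iff `(i,n) ∈ pre`, and
`cnt_{s+1}(i,n) = cnt_s(i,n) + Σ_{n' : (χ i, n', n, s) ∈ T} cnt_s(i,n')`. -/
noncomputable def cntI {I G P S : ℕ} (χ : Fin I → Fin G) (pre : Set (Fin I × Fin P))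
    (T : Finset (Fin G × Fin P × Fin P × Fin S)) : ℕ → Fin I → Fin P → ℕ
  | 0, i, n => if (i, n) ∈ pre then 1 else 0
  | s + 1, i, n =>
      cntI χ pre T s i n +
        if h : s < S then
          ∑ n' : Fin P, if (χ i, n', n, ⟨s, h⟩) ∈ T then cntI χ pre T s i n' else 0
        else 0

/-- `T` with round sequence `r` is an exactly-once algorithm for `(cap, pre, post)`:
`cnt_S(i,n) = 1` for every `(i,n) ∈ post`, and the bandwidth constraints hold. -/
def ExactlyOnce {I G P S : ℕ} (χ : Fin I → Fin G) (cap : Fin P → Fin P → ℕ)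
    (pre post : Set (Fin I × Fin P)) (T : Finset (Fin G × Fin P × Fin P × Fin S))
    (r : Fin S → ℕ) : Prop :=
  (∀ q ∈ post, cntI χ pre T S q.1 q.2 = 1) ∧ BWOk cap T r

/-- The reversal `𝓡(T) = {(c, n', n, S−1−s) : (c, n, n', s) ∈ T}` of a candidate. -/
def revT {G P S : ℕ} (T : Finset (Fin G × Fin P × Fin P × Fin S)) :
    Finset (Fin G × Fin P × Fin P × Fin S) :=
  T.image fun x => (x.1, x.2.2.1, x.2.1, x.2.2.2.rev)

lemma mem_revT' {G P S : ℕ} (T : Finset (Fin G × Fin P × Fin P × Fin S))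
    (c : Fin G) (a b : Fin P) (t : Fin S) :
    (c, a, b, t) ∈ revT T ↔ (c, b, a, t.rev) ∈ T := by
  constructor
  · intro h
    simp only [revT, Finset.mem_image] at h
    obtain ⟨⟨c', a', b', t'⟩, hmem, heq⟩ := h
    simp only [Prod.mk.injEq] at heq
    obtain ⟨h1, h2, h3, h4⟩ := heq
    subst h1 h2 h3
    have : t' = t.rev := by rw [← h4, Fin.rev_rev]
    subst this; exact hmem
  · intro h
    simp only [revT, Finset.mem_image]
    exact ⟨(c, b, a, t.rev), h, by simp [Fin.rev_rev]⟩

lemma pairing' {I G P S : ℕ} (χ : Fin I → Fin G) (pre : Set (Fin I × Fin P))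
    (pre' : Set (Fin G × Fin P)) (T : Finset (Fin G × Fin P × Fin P × Fin S))
    (i : Fin I) :
    ∀ s, s ≤ S →
      ∑ n : Fin P, cntI id pre' (revT T) s (χ i) n * cntI χ pre T (S - s) i n
        = ∑ n : Fin P, cntI id pre' (revT T) 0 (χ i) n * cntI χ pre T S i n := by
  intro s
  induction s with
  | zero => intro _; simp
  | succ s ih =>
    intro hs1
    have hs : s < S := hs1
    rw [← ih (le_of_lt hs)]
    have ht : S - (s+1) < S := by omega
    have hrev : (⟨s, hs⟩ : Fin S).rev = ⟨S - (s+1), ht⟩ := by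
      ext
      rw [Fin.val_rev]
    have hSs : S - s = (S - (s+1)) + 1 := by omega
    set t := S - (s+1) with htdef
    have hL : ∀ n : Fin P, cntI id pre' (revT T) (s+1) (χ i) n
        = cntI id pre' (revT T) s (χ i) n + ∑ n' : Fin P, if (χ i, n, n', (⟨t, ht⟩ : Fin S)) ∈ T then cntI id pre' (revT T) s (χ i) n' else 0 := by
      intro n
      show cntI id pre' (revT T) s (χ i) n + _ = _
      rw [dif_pos hs]
      congr 1
      refine Finset.sum_congr rfl fun n' _ => ?_
      have : ((id (χ i) : Fin G), n', n, (⟨s, hs⟩ : Fin S)) ∈ revT T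
          ↔ (χ i, n, n', (⟨t, ht⟩ : Fin S)) ∈ T := by
        rw [mem_revT', hrev]; rfl
      simp only [this]
    have hR : ∀ n : Fin P, cntI χ pre T (S - s) i n
        = cntI χ pre T t i n + ∑ n' : Fin P, if (χ i, n', n, (⟨t, ht⟩ : Fin S)) ∈ T then cntI χ pre T t i n' else 0 := by
      intro n
      rw [hSs]
      show cntI χ pre T t i n + _ = _
      rw [dif_pos ht]
    simp only [hL, hR, add_mul, mul_add, Finset.sum_add_distrib]
    congr 1
    simp only [Finset.sum_mul, Finset.mul_sum, ite_mul, zero_mul, mul_ite, mul_zero]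
    rw [Finset.sum_comm]

/-- Reduction of combining to non-combining collectives, no-solution direction: any
exactly-once algorithm `T` for the combining instance `(cap, pre, post)` reverses to an
exactly-once algorithm for the reversed non-combining instance `(capᵀ, pre', post')`;
consequently if the reversed instance has no `S`-step exactly-once algorithm, neither does
the original. -/
theorem combining_reduction_no_solution
    {I G P S : ℕ} (hI : 1 ≤ I) (hG : 1 ≤ G) (hP : 1 ≤ P)
    (χ : Fin I → Fin G) (hχ : Function.Surjective χ)
    (cap : Fin P → Fin P → ℕ) (pre post : Set (Fin I × Fin P))
    (hpre : ∀ i : Fin I, ∃! n : Fin P, (i, n) ∈ pre)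
    (root : Fin G → Fin P) (hpost : post = {q : Fin I × Fin P | q.2 = root (χ q.1)}) :
    (∀ (T : Finset (Fin G × Fin P × Fin P × Fin S)) (r : Fin S → ℕ),
      ExactlyOnce χ cap pre post T r →
        ExactlyOnce (id : Fin G → Fin G) (fun n n' => cap n' n)
          ((fun p : Fin I × Fin P => (χ p.1, p.2)) '' post)
          ((fun p : Fin I × Fin P => (χ p.1, p.2)) '' pre) (revT T) (fun s => r s.rev)) ∧
    ((¬ ∃ (T' : Finset (Fin G × Fin P × Fin P × Fin S)) (q : Fin S → ℕ),
        ExactlyOnce (id : Fin G → Fin G) (fun n n' => cap n' n)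
          ((fun p : Fin I × Fin P => (χ p.1, p.2)) '' post)
          ((fun p : Fin I × Fin P => (χ p.1, p.2)) '' pre) T' q) →
      ¬ ∃ (T : Finset (Fin G × Fin P × Fin P × Fin S)) (r : Fin S → ℕ),
        ExactlyOnce χ cap pre post T r) := by
  classical
  set pre' : Set (Fin G × Fin P) := (fun p : Fin I × Fin P => (χ p.1, p.2)) '' post with hpre'def
  have hpre' : ∀ (c : Fin G) (m : Fin P), (c, m) ∈ pre' ↔ m = root c := by
    intro c m
    constructor
    · rintro ⟨p, hp, heq⟩
      rw [hpost] at hp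
      simp only [Set.mem_setOf_eq] at hp
      simp only [Prod.mk.injEq] at heq
      rw [← heq.2, ← heq.1, hp]
    · rintro rfl
      obtain ⟨j, hj⟩ := hχ c
      refine ⟨(j, root (χ j)), ?_, ?_⟩
      · rw [hpost]; exact rfl
      · simp [hj]
  have main : ∀ (T : Finset (Fin G × Fin P × Fin P × Fin S)) (r : Fin S → ℕ),
      ExactlyOnce χ cap pre post T r →
        ExactlyOnce (id : Fin G → Fin G) (fun n n' => cap n' n) pre'
          ((fun p : Fin I × Fin P => (χ p.1, p.2)) '' pre) (revT T) (fun s => r s.rev) := by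
    intro T r hT
    constructor
    · rintro ⟨c, n⟩ hq
      obtain ⟨⟨i0, n0⟩, hp, heq⟩ := hq
      simp only [Prod.mk.injEq] at heq
      obtain ⟨hc, hn⟩ := heq
      rw [hn] at hp
      have key := pairing' χ pre pre' T i0 S le_rfl
      rw [Nat.sub_self] at key
      have hL : ∑ n' : Fin P, cntI id pre' (revT T) S (χ i0) n' * cntI χ pre T 0 i0 n'
          = cntI id pre' (revT T) S (χ i0) n := by
        rw [Finset.sum_eq_single n]
        · show cntI id pre' (revT T) S (χ i0) n * (if (i0, n) ∈ pre then 1 else 0) = _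
          rw [if_pos hp, mul_one]
        · intro n' _ hne
          show cntI id pre' (revT T) S (χ i0) n' * (if (i0, n') ∈ pre then 1 else 0) = 0
          rw [if_neg, mul_zero]
          intro hmem
          obtain ⟨m, hm, huniq⟩ := hpre i0
          exact hne ((huniq n' hmem).trans (huniq n hp).symm)
        · intro h; exact absurd (Finset.mem_univ n) h
      have hR : ∑ n' : Fin P, cntI id pre' (revT T) 0 (χ i0) n' * cntI χ pre T S i0 n'
          = cntI χ pre T S i0 (root (χ i0)) := by
        rw [Finset.sum_eq_single (root (χ i0))]
        · show (if (χ i0, root (χ i0)) ∈ pre' then 1 else 0) * _ = _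
          rw [if_pos ((hpre' _ _).2 rfl), one_mul]
        · intro n' _ hne
          show (if (χ i0, n') ∈ pre' then 1 else 0) * cntI χ pre T S i0 n' = 0
          rw [if_neg, zero_mul]
          intro hmem
          exact hne ((hpre' _ _).1 hmem)
        · intro h; exact absurd (Finset.mem_univ _) h
      have hone : cntI χ pre T S i0 (root (χ i0)) = 1 := by
        apply hT.1 (i0, root (χ i0))
        rw [hpost]; exact rfl
      show cntI id pre' (revT T) S c n = 1
      rw [← hc, ← hL, key, hR, hone]
    · intro s n n'
      have hinj : Function.Injective
          (fun x : Fin G × Fin P × Fin P × Fin S => (x.1, x.2.2.1, x.2.1, x.2.2.2.rev)) := by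
        rintro ⟨a, b, c, d⟩ ⟨a', b', c', d'⟩ h
        simp only [Prod.mk.injEq] at h ⊢
        exact ⟨h.1, h.2.2.1, h.2.1, Fin.rev_inj.1 h.2.2.2⟩
      show ((revT T).filter fun x => x.2.1 = n ∧ x.2.2.1 = n' ∧ x.2.2.2 = s).card ≤ _
      rw [revT, Finset.filter_image, Finset.card_image_of_injective _ hinj]
      have hfil : (T.filter fun x : Fin G × Fin P × Fin P × Fin S =>
            x.2.2.1 = n ∧ x.2.1 = n' ∧ x.2.2.2.rev = s)
          = T.filter fun x => x.2.1 = n' ∧ x.2.2.1 = n ∧ x.2.2.2 = s.rev := by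
        apply Finset.filter_congr
        intro x _
        constructor
        · rintro ⟨h1, h2, h3⟩
          exact ⟨h2, h1, by rw [← h3, Fin.rev_rev]⟩
        · rintro ⟨h1, h2, h3⟩
          exact ⟨h2, h1, by rw [h3, Fin.rev_rev]⟩
      calc (T.filter fun x : Fin G × Fin P × Fin P × Fin S =>
            x.2.2.1 = n ∧ x.2.1 = n' ∧ x.2.2.2.rev = s).card
          = (T.filter fun x => x.2.1 = n' ∧ x.2.2.1 = n ∧ x.2.2.2 = s.rev).card := by
            rw [hfil]
        _ ≤ cap n' n * r s.rev := hT.2 s.rev n' n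
  exact ⟨main, fun hno h => by
    obtain ⟨T, r, hT⟩ := h
    exact hno ⟨revT T, fun s => r s.rev, main T r hT⟩⟩
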